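/- arXiv:1904.06666 — 3 statements merged into one kernel-verified Lean document; each statement's English description precedes it below -/
import Mathlib

section
/- Let d_c ≥ 2, assume P(r|0)+P(r|1) > 0 for all r ∈ R, and suppose ε is admissible for d_c. Let r, r' ∈ R^{d_c−1} be such that g_{d_c−1}(r) ≠ 0, g_{d_c−1}(r') ≠ 0, sgn(g_{d_c−1}(r)) = sgn(g_{d_c−1}(r')) = s, and −s·log|g_{d_c−1}(r)| < −s·log|g_{d_c−1}(r')|. Then s·( −log|g_{d_c−1}(r)| + h(r)·ε ) < s·( −log|g_{d_c−1}(r')| + h(r')·ε ), where h(r) = #{ i : |g(r_i)| = 1 }. -/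
open scoped BigOperators Classical

/-- `g(r) = (P(r|0) − P(r|1)) / (P(r|0) + P(r|1))`. -/
noncomputable def gfun {R : Type*} (P : R → ZMod 2 → ℝ) (r : R) : ℝ :=
  (P r 0 - P r 1) / (P r 0 + P r 1)

/-- `g_d(r) = Π_{i=1}^d g(r_i)` for a tuple `r ∈ R^d`. -/
noncomputable def gProd {R : Type*} (P : R → ZMod 2 → ℝ) {d : ℕ} (r : Fin d → R) : ℝ :=
  ∏ i, gfun P (r i)

/-- `ε` is admissible for `d_c`:
`0 < ε·d_c < min{ |log|g(r)| − log|g(r')|| : r, r' ∈ R^{d_c−1},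
  g(r) ≠ g(r'), sgn g(r) = sgn g(r') ≠ 0 }`
(the minimum over an empty set being `+∞`). -/
def admissible {R : Type*} [Fintype R] (P : R → ZMod 2 → ℝ) (dc : ℕ) (ε : ℝ) : Prop :=
  0 < ε * dc ∧
    ∀ r r' : Fin (dc - 1) → R,
      gProd P r ≠ gProd P r' →
      Real.sign (gProd P r) = Real.sign (gProd P r') →
      Real.sign (gProd P r) ≠ 0 →
      ε * dc < abs (Real.log |gProd P r| - Real.log |gProd P r'|)

/-- If the signed logs are strictly ordered, then the signed logs corrected by
the `h(·)·ε` terms are strictly ordered in the same way. -/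
theorem stmt_4 {R : Type*} [Fintype R] (P : R → ZMod 2 → ℝ)
    (hP0 : ∀ r x, 0 ≤ P r x) (hP1 : ∀ x, ∑ r : R, P r x = 1)
    (hpos : ∀ r : R, 0 < P r 0 + P r 1)
    (dc : ℕ) (hdc : 2 ≤ dc) (ε : ℝ) (hε : admissible P dc ε)
    (r r' : Fin (dc - 1) → R) (s : ℝ)
    (h1 : gProd P r ≠ 0) (h2 : gProd P r' ≠ 0)
    (hs : Real.sign (gProd P r) = s) (hs' : Real.sign (gProd P r') = s)
    (hlt : -s * Real.log |gProd P r| < -s * Real.log |gProd P r'|) :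
    s * (-Real.log |gProd P r| +
        ((Finset.univ.filter (fun i : Fin (dc - 1) => |gfun P (r i)| = 1)).card : ℝ) * ε) <
      s * (-Real.log |gProd P r'| +
        ((Finset.univ.filter (fun i : Fin (dc - 1) => |gfun P (r' i)| = 1)).card : ℝ) * ε) := by
  obtain ⟨hεdc, hadm⟩ := hε
  have hdcR : (2:ℝ) ≤ (dc:ℝ) := by exact_mod_cast hdc
  have hεpos : 0 < ε := by nlinarith
  have hne : gProd P r ≠ gProd P r' := by
    intro h; rw [h] at hlt; exact lt_irrefl _ hlt
  have hsne : Real.sign (gProd P r) ≠ 0 := by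
    rcases Real.sign_apply_eq_of_ne_zero _ h1 with h | h <;> rw [h] <;> norm_num
  have key := hadm r r' hne (hs.trans hs'.symm) hsne
  set L := Real.log |gProd P r|
  set L' := Real.log |gProd P r'|
  set c : ℝ := ((Finset.univ.filter (fun i : Fin (dc - 1) => |gfun P (r i)| = 1)).card : ℝ)
  set c' : ℝ := ((Finset.univ.filter (fun i : Fin (dc - 1) => |gfun P (r' i)| = 1)).card : ℝ)
  have hc0 : 0 ≤ c := Nat.cast_nonneg _
  have hc'0 : 0 ≤ c' := Nat.cast_nonneg _
  have hcle : c ≤ (dc:ℝ) - 1 := by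
    have := Finset.card_filter_le (Finset.univ : Finset (Fin (dc-1)))
      (fun i => |gfun P (r i)| = 1)
    have h2 : (Finset.univ : Finset (Fin (dc-1))).card = dc - 1 := by simp
    have : ((Finset.univ.filter (fun i : Fin (dc - 1) => |gfun P (r i)| = 1)).card : ℝ)
        ≤ ((dc - 1 : ℕ) : ℝ) := by exact_mod_cast h2 ▸ this
    rwa [Nat.cast_sub (by omega), Nat.cast_one] at this
  have hc'le : c' ≤ (dc:ℝ) - 1 := by
    have := Finset.card_filter_le (Finset.univ : Finset (Fin (dc-1)))
      (fun i => |gfun P (r' i)| = 1)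
    have h2 : (Finset.univ : Finset (Fin (dc-1))).card = dc - 1 := by simp
    have : ((Finset.univ.filter (fun i : Fin (dc - 1) => |gfun P (r' i)| = 1)).card : ℝ)
        ≤ ((dc - 1 : ℕ) : ℝ) := by exact_mod_cast h2 ▸ this
    rwa [Nat.cast_sub (by omega), Nat.cast_one] at this
  have hs1 : s = 1 ∨ s = -1 := by
    rcases Real.sign_apply_eq_of_ne_zero _ h1 with h | h
    · right; rw [← hs, h]
    · left; rw [← hs, h]
  rcases hs1 with h | h <;> subst h
  · have hLL : L' < L := by linarith
    rw [abs_of_pos (by linarith)] at key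
    nlinarith
  · have hLL : L < L' := by linarith
    rw [abs_of_neg (by linarith)] at key
    nlinarith
end

section
/- Let d_c ≥ 2, assume P(r|0)+P(r|1) > 0 for all r ∈ R, suppose ε is admissible for d_c, and take the reconstruction function φ = φ_c*. For r, r' ∈ R^{d_c−1}, if P_{d_c−1}(r|0)·P_{d_c−1}(r'|1) > P_{d_c−1}(r'|0)·P_{d_c−1}(r|1) (i.e., the likelihood ratio of r strictly exceeds that of r', with ratios having zero denominator treated as largest), then Φ(r) ≻ Φ(r'). -/
/-! Put `S = ∏ i, (P(r_i|0) + P(r_i|1))` and `D = ∏ i, (P(r_i|0) - P(r_i|1))`. Splitting the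
parity sums gives `P_d(r|0), P_d(r|1) = 2^(-d) (S ± D)`, so the likelihood ratio is
`(1 + g_d(r)) / (1 - g_d(r))` and the hypothesis says exactly `g_d(r') < g_d(r)`.
On the other side `Φ(r) = sgn(g_d(r)) · (-log |g_d(r)| + k ε)`, where `k ≤ d_c - 1` counts the
coordinates with `|g(r_i)| = 1`. Hence `sgn Φ = sgn g_d` is monotone in `g_d`, and within one sign
class the perturbation `k ε` is smaller than the gap between the values of `log |g_d|` that
admissibility of `ε` guarantees. -/

open scoped BigOperators Classical

/-- Check-node joint conditional pmf:
`P_d(r|x) = (1/2)^(d-1) · Σ_{b : parity b = x} Π_i P(r_i | b_i)`. -/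
noncomputable def checkPmf {R : Type*} [Fintype R] (P : R → ZMod 2 → ℝ) (d : ℕ)
    (r : Fin d → R) (x : ZMod 2) : ℝ :=
  (1 / 2 : ℝ) ^ (d - 1) *
    ∑ b ∈ Finset.univ.filter (fun b : Fin d → ZMod 2 => ∑ i, b i = x),
      ∏ i, P (r i) (b i)

/-- The optimal check-node reconstruction function `φ_c*`. -/
noncomputable def phiStar {R : Type*} (P : R → ZMod 2 → ℝ) (ε : ℝ) (r : R) : ℝ :=
  if |gfun P r| = 1 then Real.sign (gfun P r) * ε
  else if gfun P r = 0 then 0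
  else -Real.sign (gfun P r) * Real.log |gfun P r|

/-- Combined check-node value:
`Φ(r) = (Π_i sgn(φ(r_i))) · Σ_i |φ(r_i)|`. -/
noncomputable def PhiC {R : Type*} (φ : R → ℝ) {d : ℕ} (r : Fin d → R) : ℝ :=
  (∏ i, Real.sign (φ (r i))) * ∑ i, |φ (r i)|

/-- `α ≻ β` iff `sgn α > sgn β`, or (`sgn α = sgn β` and `α < β`). -/
def rsucc (α β : ℝ) : Prop :=
  Real.sign β < Real.sign α ∨ (Real.sign α = Real.sign β ∧ α < β)

open Finset

theorem Real.sign_mul (a b : ℝ) : Real.sign (a * b) = Real.sign a * Real.sign b := by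
  rcases lt_trichotomy a 0 with ha | rfl | ha <;> rcases lt_trichotomy b 0 with hb | rfl | hb <;>
    simp [Real.sign_of_neg, Real.sign_of_pos, mul_pos_of_neg_of_neg, mul_neg_of_neg_of_pos,
      mul_neg_of_pos_of_neg, *]

theorem Real.sign_prod {ι : Type*} (s : Finset ι) (f : ι → ℝ) :
    Real.sign (∏ i ∈ s, f i) = ∏ i ∈ s, Real.sign (f i) := by
  induction s using Finset.induction with
  | empty => simp [Real.sign_one]
  | insert _ _ h ih => rw [prod_insert h, prod_insert h, Real.sign_mul, ih]

theorem Real.sign_sign (a : ℝ) : Real.sign (Real.sign a) = Real.sign a := by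
  rcases Real.sign_apply_eq a with h | h | h <;>
    simp [h, Real.sign_neg, Real.sign_one, Real.sign_zero]

theorem Real.sign_mono : Monotone Real.sign := by
  intro a b h
  rcases lt_trichotomy a 0 with ha | rfl | ha
  · rw [Real.sign_of_neg ha]
    rcases Real.sign_apply_eq b with hb | hb | hb <;> rw [hb] <;> norm_num
  · rcases h.lt_or_eq with h | rfl
    · simp [Real.sign_of_pos h]
    · rfl
  · rw [Real.sign_of_pos ha, Real.sign_of_pos (ha.trans_le h)]

theorem Real.sign_mul_sub_log_abs {a b : ℝ} (hba : b < a) (hs : Real.sign a = Real.sign b) :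
    Real.sign a * (Real.log |a| - Real.log |b|) = abs (Real.log |a| - Real.log |b|) := by
  rcases lt_trichotomy a 0 with ha | rfl | ha
  · have hlog : Real.log |a| < Real.log |b| := by
      refine Real.log_lt_log (abs_pos.mpr ha.ne) ?_
      rw [abs_of_neg ha, abs_of_neg (hba.trans ha)]
      linarith
    rw [Real.sign_of_neg ha, abs_of_neg (sub_neg.mpr hlog)]
    ring
  · rw [Real.sign_zero, eq_comm, Real.sign_eq_zero_iff] at hs
    exact absurd hs hba.ne
  · have hb : 0 < b := by
      by_contra! hb
      have := Real.sign_mono hb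
      rw [← hs, Real.sign_of_pos ha, Real.sign_zero] at this
      norm_num at this
    have hlog : Real.log |b| < Real.log |a| :=
      Real.log_lt_log (abs_pos.mpr hb.ne') (by rwa [abs_of_pos ha, abs_of_pos hb])
    rw [Real.sign_of_pos ha, abs_of_pos (sub_pos.mpr hlog), one_mul]

def parityChar (x : ZMod 2) : ℝ := if x = 0 then 1 else -1

theorem ZMod.two_cases (x : ZMod 2) : x = 0 ∨ x = 1 := by
  revert x; decide

theorem ZMod.sum_univ_two {M : Type*} [AddCommMonoid M] (g : ZMod 2 → M) :
    ∑ x, g x = g 0 + g 1 :=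
  Fin.sum_univ_two g

theorem parityChar_add (x y : ZMod 2) : parityChar (x + y) = parityChar x * parityChar y := by
  rcases x.two_cases with rfl | rfl <;> rcases y.two_cases with rfl | rfl <;>
    simp [parityChar, CharTwo.add_self_eq_zero]

theorem parityChar_sum {ι : Type*} (s : Finset ι) (b : ι → ZMod 2) :
    parityChar (∑ i ∈ s, b i) = ∏ i ∈ s, parityChar (b i) := by
  induction s using Finset.induction with
  | empty => simp [parityChar]
  | insert _ _ h ih => rw [sum_insert h, prod_insert h, parityChar_add, ih]

section Parity

variable {ι : Type*} [Fintype ι] [DecidableEq ι] (f : ι → ZMod 2 → ℝ)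

theorem sum_even_add_sum_odd :
    (∑ b ∈ univ.filter (fun b : ι → ZMod 2 => ∑ i, b i = 0), ∏ i, f i (b i)) +
      ∑ b ∈ univ.filter (fun b : ι → ZMod 2 => ∑ i, b i = 1), ∏ i, f i (b i) =
      ∏ i, (f i 0 + f i 1) := by
  simp_rw [← ZMod.sum_univ_two, Fintype.prod_sum, sum_filter, ← sum_add_distrib]
  refine sum_congr rfl fun b _ => ?_
  rcases (∑ i, b i).two_cases with h | h <;> simp [h]

theorem sum_even_sub_sum_odd :
    (∑ b ∈ univ.filter (fun b : ι → ZMod 2 => ∑ i, b i = 0), ∏ i, f i (b i)) -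
      ∑ b ∈ univ.filter (fun b : ι → ZMod 2 => ∑ i, b i = 1), ∏ i, f i (b i) =
      ∏ i, (f i 0 - f i 1) := by
  have hsub : ∀ i, f i 0 - f i 1 = ∑ x : ZMod 2, parityChar x * f i x := fun i => by
    rw [ZMod.sum_univ_two]; norm_num [parityChar]; ring
  simp_rw [hsub, Fintype.prod_sum, prod_mul_distrib, ← parityChar_sum, sum_filter,
    ← sum_sub_distrib]
  refine sum_congr rfl fun b _ => ?_
  rcases (∑ i, b i).two_cases with h | h <;> simp [h, parityChar]

end Parity

section CheckNode

variable {R : Type*} (P : R → ZMod 2 → ℝ)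

theorem checkPmf_zero [Fintype R] (d : ℕ) (r : Fin d → R) :
    checkPmf P d r 0 =
      (1 / 2) ^ (d - 1) *
        ((∏ i, (P (r i) 0 + P (r i) 1)) + ∏ i, (P (r i) 0 - P (r i) 1)) / 2 := by
  rw [checkPmf, ← sum_even_add_sum_odd (fun i => P (r i)),
    ← sum_even_sub_sum_odd (fun i => P (r i))]
  ring

theorem checkPmf_one [Fintype R] (d : ℕ) (r : Fin d → R) :
    checkPmf P d r 1 =
      (1 / 2) ^ (d - 1) *
        ((∏ i, (P (r i) 0 + P (r i) 1)) - ∏ i, (P (r i) 0 - P (r i) 1)) / 2 := by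
  rw [checkPmf, ← sum_even_add_sum_odd (fun i => P (r i)),
    ← sum_even_sub_sum_odd (fun i => P (r i))]
  ring

theorem gProd_eq_div {d : ℕ} (r : Fin d → R) :
    gProd P r = (∏ i, (P (r i) 0 - P (r i) 1)) / ∏ i, (P (r i) 0 + P (r i) 1) :=
  prod_div_distrib _ _

theorem gProd_lt_gProd_of_likelihood_lt [Fintype R] (hpos : ∀ x, 0 < P x 0 + P x 1) {d : ℕ}
    {r r' : Fin d → R}
    (hLR : checkPmf P d r' 0 * checkPmf P d r 1 < checkPmf P d r 0 * checkPmf P d r' 1) :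
    gProd P r' < gProd P r := by
  set c : ℝ := (1 / 2) ^ (d - 1)
  set S := ∏ i, (P (r i) 0 + P (r i) 1)
  set D := ∏ i, (P (r i) 0 - P (r i) 1)
  set S' := ∏ i, (P (r' i) 0 + P (r' i) 1)
  set D' := ∏ i, (P (r' i) 0 - P (r' i) 1)
  have hS : 0 < S := prod_pos fun i _ => hpos (r i)
  have hS' : 0 < S' := prod_pos fun i _ => hpos (r' i)
  have key : c ^ 2 * (D * S' - D' * S) =
      2 * (checkPmf P d r 0 * checkPmf P d r' 1 - checkPmf P d r' 0 * checkPmf P d r 1) := by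
    rw [checkPmf_zero, checkPmf_one, checkPmf_zero, checkPmf_one]
    ring
  rw [gProd_eq_div, gProd_eq_div, div_lt_div_iff₀ hS' hS]
  have hc : 0 < c ^ 2 := by positivity
  nlinarith

end CheckNode

section Reconstruction

variable {R : Type*} (P : R → ZMod 2 → ℝ) (ε : ℝ)

theorem abs_gfun_le_one (hP0 : ∀ x b, 0 ≤ P x b) (hpos : ∀ x, 0 < P x 0 + P x 1) (x : R) :
    |gfun P x| ≤ 1 := by
  rw [gfun, abs_div, abs_of_pos (hpos x), div_le_one (hpos x), abs_le]
  constructor <;> linarith [hP0 x 0, hP0 x 1]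

/-- `|φ_c*(x)|`; the junk value `log 0 = 0` makes it vanish where `g(x) = 0`. -/
noncomputable def phiStarMag (x : R) : ℝ :=
  -Real.log |gfun P x| + if |gfun P x| = 1 then ε else 0

theorem phiStar_eq_sign_mul (x : R) :
    phiStar P ε x = Real.sign (gfun P x) * phiStarMag P ε x := by
  unfold phiStar phiStarMag
  split_ifs with h1 h0 <;> simp [*]

variable {P ε}

theorem phiStarMag_pos (hε : 0 < ε) {x : R} (hle : |gfun P x| ≤ 1) (h0 : gfun P x ≠ 0) :
    0 < phiStarMag P ε x := by
  unfold phiStarMag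
  split_ifs with h1
  · rw [h1, Real.log_one]; linarith
  · linarith [Real.log_neg (abs_pos.mpr h0) (hle.lt_of_ne h1)]

theorem sign_phiStar (hε : 0 < ε) {x : R} (hle : |gfun P x| ≤ 1) :
    Real.sign (phiStar P ε x) = Real.sign (gfun P x) := by
  by_cases h0 : gfun P x = 0
  · simp [phiStar_eq_sign_mul, h0, Real.sign_zero]
  · rw [phiStar_eq_sign_mul, Real.sign_mul, Real.sign_of_pos (phiStarMag_pos hε hle h0), mul_one,
      Real.sign_sign]

theorem abs_phiStar (hε : 0 < ε) {x : R} (hle : |gfun P x| ≤ 1) :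
    |phiStar P ε x| = phiStarMag P ε x := by
  by_cases h0 : gfun P x = 0
  · simp [phiStar_eq_sign_mul, phiStarMag, h0]
  · rw [phiStar_eq_sign_mul, abs_mul, abs_of_pos (phiStarMag_pos hε hle h0)]
    rcases Real.sign_apply_eq_of_ne_zero _ h0 with h | h <;> simp [h]

theorem PhiC_phiStar (hg : ∀ x, |gfun P x| ≤ 1) (hε : 0 < ε) {d : ℕ} (r : Fin d → R) :
    PhiC (phiStar P ε) r = Real.sign (gProd P r) * ∑ i, phiStarMag P ε (r i) := by
  simp only [PhiC, sign_phiStar hε (hg _), abs_phiStar hε (hg _), gProd, Real.sign_prod]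

theorem sum_phiStarMag {d : ℕ} {r : Fin d → R} (hG : gProd P r ≠ 0) :
    ∑ i, phiStarMag P ε (r i) = -Real.log |gProd P r| + #{i | |gfun P (r i)| = 1} * ε := by
  have hne : ∀ i ∈ univ, |gfun P (r i)| ≠ 0 := fun i hi =>
    abs_ne_zero.mpr (prod_ne_zero_iff.mp hG i hi)
  simp only [phiStarMag, sum_add_distrib, sum_neg_distrib, gProd, abs_prod, Real.log_prod hne,
    sum_ite, sum_const_zero, add_zero, sum_const, nsmul_eq_mul]

theorem sign_PhiC_phiStar (hg : ∀ x, |gfun P x| ≤ 1) (hε : 0 < ε) {d : ℕ} (hd : 0 < d)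
    (r : Fin d → R) :
    Real.sign (PhiC (phiStar P ε) r) = Real.sign (gProd P r) := by
  rw [PhiC_phiStar hg hε]
  by_cases hG : gProd P r = 0
  · simp [hG, Real.sign_zero]
  have hsum : 0 < ∑ i, phiStarMag P ε (r i) :=
    sum_pos (fun i hi => phiStarMag_pos hε (hg _) (prod_ne_zero_iff.mp hG i hi))
      (univ_nonempty_iff.mpr (Fin.pos_iff_nonempty.mp hd))
  rw [Real.sign_mul, Real.sign_of_pos hsum, mul_one, Real.sign_sign]

end Reconstruction

section Admissible

variable {R : Type*} [Fintype R] {P : R → ZMod 2 → ℝ} {dc : ℕ} {ε : ℝ}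

theorem admissible.pos (hadm : admissible P dc ε) : 0 < ε :=
  pos_of_mul_pos_left hadm.1 (Nat.cast_nonneg _)

theorem PhiC_phiStar_lt_of_admissible (hg : ∀ x, |gfun P x| ≤ 1) (hadm : admissible P dc ε)
    (hdc : 1 ≤ dc) {r r' : Fin (dc - 1) → R} (hlt : gProd P r' < gProd P r)
    (hs : Real.sign (gProd P r) = Real.sign (gProd P r')) :
    PhiC (phiStar P ε) r < PhiC (phiStar P ε) r' := by
  have hε := hadm.pos
  have hG : gProd P r ≠ 0 := by
    rintro hG
    rw [hG, Real.sign_zero, eq_comm, Real.sign_eq_zero_iff] at hs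
    exact hlt.ne (hs.trans hG.symm)
  have hG' : gProd P r' ≠ 0 := by
    rintro hG'
    rw [hG', Real.sign_zero, Real.sign_eq_zero_iff] at hs
    exact hlt.ne (hG'.trans hs.symm)
  have hgap := hadm.2 r r' hlt.ne' hs (mt Real.sign_eq_zero_iff.mp hG)
  rw [← Real.sign_mul_sub_log_abs hlt hs] at hgap
  have hcount : ∀ s : Fin (dc - 1) → R,
      (#{i | |gfun P (s i)| = 1} : ℝ) * ε ≤ (dc - 1) * ε := by
    intro s
    gcongr
    calc (#{i | |gfun P (s i)| = 1} : ℝ) ≤ ((dc - 1 : ℕ) : ℝ) := by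
          exact_mod_cast (card_filter_le _ _).trans (card_fin _).le
      _ = dc - 1 := by rw [Nat.cast_sub hdc, Nat.cast_one]
  have hcount₀ : ∀ s : Fin (dc - 1) → R, 0 ≤ (#{i | |gfun P (s i)| = 1} : ℝ) * ε :=
    fun s => by positivity
  rw [PhiC_phiStar hg hε, PhiC_phiStar hg hε, sum_phiStarMag hG, sum_phiStarMag hG', ← hs]
  rcases Real.sign_apply_eq_of_ne_zero _ hG with h | h <;> rw [h] at hgap ⊢ <;>
    linarith [hcount r, hcount r', hcount₀ r, hcount₀ r']

end Admissible

theorem stmt_5_general {R : Type*} [Fintype R] (P : R → ZMod 2 → ℝ)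
    (hP0 : ∀ r x, 0 ≤ P r x)
    (hpos : ∀ r : R, 0 < P r 0 + P r 1)
    (dc : ℕ) (hdc : 2 ≤ dc) (ε : ℝ) (hε : admissible P dc ε)
    (r r' : Fin (dc - 1) → R)
    (hLR : checkPmf P (dc - 1) r 0 * checkPmf P (dc - 1) r' 1 >
      checkPmf P (dc - 1) r' 0 * checkPmf P (dc - 1) r 1) :
    rsucc (PhiC (phiStar P ε) r) (PhiC (phiStar P ε) r') := by
  have hg := abs_gfun_le_one P hP0 hpos
  have hlt : gProd P r' < gProd P r := gProd_lt_gProd_of_likelihood_lt P hpos hLR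
  rw [rsucc, sign_PhiC_phiStar hg hε.pos (by omega) r, sign_PhiC_phiStar hg hε.pos (by omega) r']
  rcases (Real.sign_mono hlt.le).lt_or_eq with hs | hs
  · exact Or.inl hs
  · exact Or.inr ⟨hs.symm, PhiC_phiStar_lt_of_admissible hg hε (by omega) hlt hs.symm⟩

/-- If the likelihood ratio of `r` strictly exceeds that of `r'` (in
cross-multiplied form), then `Φ(r) ≻ Φ(r')`. -/
theorem stmt_5 {R : Type*} [Fintype R] (P : R → ZMod 2 → ℝ)
    (hP0 : ∀ r x, 0 ≤ P r x) (hP1 : ∀ x, ∑ r : R, P r x = 1)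
    (hpos : ∀ r : R, 0 < P r 0 + P r 1)
    (dc : ℕ) (hdc : 2 ≤ dc) (ε : ℝ) (hε : admissible P dc ε)
    (r r' : Fin (dc - 1) → R)
    (hLR : checkPmf P (dc - 1) r 0 * checkPmf P (dc - 1) r' 1 >
      checkPmf P (dc - 1) r' 0 * checkPmf P (dc - 1) r 1) :
    rsucc (PhiC (phiStar P ε) r) (PhiC (phiStar P ε) r') :=
  stmt_5_general P hP0 hpos dc hdc ε hε r r' hLR
end

section
/- (Theorem 1.) Let X be uniform on {0,1}, let R be a finite set with conditional pmf satisfying P(r|x) > 0 for all r ∈ R and x ∈ {0,1}, let d_c ≥ 2, let ε be admissible for d_c, and take φ = φ_c*. Let A = {a_1, …, a_{|A|}} be the set of distinct values of Φ on R^{d_c−1} labelled so that a_1 ≻ a_2 ≻ ⋯ ≻ a_{|A|}, and let S be a finite output alphabet. Assume the following fact about finite binary-input channels: for every finite set Y with conditional pmf P_{Y|X} and every enumeration y_1,…,y_N of Y satisfying P_{Y|X}(y_i|0)·P_{Y|X}(y_{i+1}|1) ≥ P_{Y|X}(y_{i+1}|0)·P_{Y|X}(y_i|1) for all i and in which elements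 with equal likelihood ratio are consecutive, the maximum of I(X; f(Y)) over all functions f : Y → S is attained by a quantizer that is sequential with respect to this enumeration and constant on each class of equal likelihood ratio. Then the maximum of I(X; f(R_1,…,R_{d_c−1})) over all functions f : R^{d_c−1} → S, where (R_1,…,R_{d_c−1}) has conditional pmf P_{d_c−1}(·|X), is attained by a function of the form Λ ∘ Φ, where Λ : A → S maps a_i to s exactly when λ_s < i ≤ λ_{s+1} for some integers 0 = λ_0 ≤ λ_1 ≤ ⋯ ≤ λ_{|S|} = |A|. -/
open scoped BigOperators Classical

/-- Joint pmf of `(X, f(Y))` where `X` is uniform on `{0,1}` and `Y` has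
conditional pmf `W` given `X`: `p(x, z) = (1/2)·Σ_{y : f(y) = z} W(y|x)`. -/
noncomputable def jointPmf {Y Z : Type*} [Fintype Y] (W : Y → ZMod 2 → ℝ)
    (f : Y → Z) (x : ZMod 2) (z : Z) : ℝ :=
  (1 / 2 : ℝ) * ∑ y ∈ Finset.univ.filter (fun y => f y = z), W y x

/-- Mutual information `I(X; f(Y))` for `X` uniform on `{0,1}` and `Y` with
conditional pmf `W` given `X`; terms with zero joint probability are `0`. -/
noncomputable def mutualInfo {Y Z : Type*} [Fintype Y] [Fintype Z]
    (W : Y → ZMod 2 → ℝ) (f : Y → Z) : ℝ :=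
  ∑ x : ZMod 2, ∑ z : Z,
    if jointPmf W f x z = 0 then 0
    else jointPmf W f x z *
      Real.log (jointPmf W f x z /
        ((1 / 2 : ℝ) * ∑ x' : ZMod 2, jointPmf W f x' z))

/-!
Write `W_d(r|x)` for the check-node channel and `g_d(r)` for the product of the
`g(r_i)`. Expanding the parity constraint with the character `(-1)^x` gives
`W_d(r|x) = c(r) · (1 + (-1)^x g_d(r)) / 2` with `c(r) > 0`, so the likelihood ratio
`W_d(r|0)/W_d(r|1) = (1 + g_d)/(1 - g_d)` is a strictly increasing function of `g_d(r)`.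
Since every `|g(r_i)| < 1`, `φ_c*` never uses `ε` and `Φ(r) = F(g_d(r))` with
`F(t) = -sgn(t) log|t|`, and on `(-1, 1)` the map `F` turns `<` into `≺`. Hence enumerating
`R^{d_c-1}` by decreasing `g_d` meets the hypotheses of the assumed quantization fact, and
the optimal sequential quantizer it provides, being constant on classes of equal `g_d`,
factors through `Φ` as a `≻`-sequential map `Λ`.
-/

open Finset

theorem Real.sign_eq_castHom_signHom (x : ℝ) :
    Real.sign x = (SignType.castHom.comp signHom : ℝ →*₀ ℝ) x := by
  rcases lt_trichotomy x 0 with h | rfl | h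
  · simp [Real.sign_of_neg h, _root_.sign_neg h]
  · simp
  · simp [Real.sign_of_pos h, _root_.sign_pos h]

noncomputable def bitSign (x : ZMod 2) : ℝ := if x = 0 then 1 else -1

@[simp] lemma bitSign_zero : bitSign 0 = 1 := if_pos rfl

@[simp] lemma bitSign_one : bitSign 1 = -1 := if_neg (by decide)

lemma ZMod.two_eq_zero_or_one : ∀ x : ZMod 2, x = 0 ∨ x = 1 := by decide

lemma bitSign_add (x y : ZMod 2) : bitSign (x + y) = bitSign x * bitSign y := by
  have h : (1 + 1 : ZMod 2) = 0 := by decide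
  rcases x.two_eq_zero_or_one with rfl | rfl <;> rcases y.two_eq_zero_or_one with rfl | rfl <;>
    simp [h]

lemma bitSign_sum {ι : Type*} (s : Finset ι) (b : ι → ZMod 2) :
    bitSign (∑ i ∈ s, b i) = ∏ i ∈ s, bitSign (b i) := by
  classical
  induction s using Finset.induction_on with
  | empty => simp
  | insert _ _ h ih => rw [sum_insert h, prod_insert h, bitSign_add, ih]

lemma sum_zmod_two (h : ZMod 2 → ℝ) : ∑ x : ZMod 2, h x = h 0 + h 1 :=
  Fin.sum_univ_two h

theorem sum_filter_sum_eq_prod {ι : Type*} [Fintype ι] [DecidableEq ι]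
    (f : ι → ZMod 2 → ℝ) (x : ZMod 2) :
    ∑ b ∈ univ.filter (fun b : ι → ZMod 2 => ∑ i, b i = x), ∏ i, f i (b i)
      = ((∏ i, (f i 0 + f i 1)) + bitSign x * ∏ i, (f i 0 - f i 1)) / 2 := by
  have hprod (c : ZMod 2 → ℝ) :
      ∑ b : ι → ZMod 2, ∏ i, c (b i) * f i (b i) = ∏ i, (c 0 * f i 0 + c 1 * f i 1) := by
    rw [← Fintype.prod_sum fun i j => c j * f i j]; simp only [sum_zmod_two]
  have hindicator (a : ZMod 2) :
      (if a = x then (1 : ℝ) else 0) = (1 + bitSign x * bitSign a) / 2 := by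
    rcases x.two_eq_zero_or_one with rfl | rfl <;> rcases a.two_eq_zero_or_one with rfl | rfl <;>
      norm_num
  calc _ = ∑ b : ι → ZMod 2, (if ∑ i, b i = x then (1 : ℝ) else 0) * ∏ i, f i (b i) := by
        simp [sum_filter]
    _ = ∑ b : ι → ZMod 2, (∏ i, 1 * f i (b i) +
          bitSign x * ∏ i, bitSign (b i) * f i (b i)) / 2 := by
        refine sum_congr rfl fun b _ => ?_
        rw [hindicator, bitSign_sum, prod_mul_distrib, prod_mul_distrib]; simp only [prod_const_one]
        ring
    _ = _ := by
        rw [← sum_div, sum_add_distrib, ← mul_sum, hprod, hprod fun _ => 1]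
        simp [sub_eq_add_neg]

lemma abs_prod_lt_one {ι : Type*} [Fintype ι] [Nonempty ι] {f : ι → ℝ}
    (h : ∀ i, |f i| < 1) : |∏ i, f i| < 1 := by
  obtain ⟨i⟩ := ‹Nonempty ι›
  rw [abs_prod, ← mul_prod_erase _ _ (mem_univ i)]
  exact mul_lt_one_of_nonneg_of_lt_one_left (abs_nonneg _) (h i)
    (prod_le_one (fun _ _ => abs_nonneg _) fun j _ => (h j).le)

section CheckChannel

variable {R : Type*} (P : R → ZMod 2 → ℝ)

lemma abs_gfun_lt_one (hpos : ∀ r x, 0 < P r x) (r : R) : |gfun P r| < 1 := by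
  have h0 := hpos r 0
  have h1 := hpos r 1
  rw [gfun, abs_div, abs_of_pos (add_pos h0 h1), div_lt_one (add_pos h0 h1), abs_lt]
  constructor <;> linarith

lemma abs_gProd_lt_one (hpos : ∀ r x, 0 < P r x) {d : ℕ} (hd : 0 < d) (r : Fin d → R) :
    |gProd P r| < 1 :=
  have : Nonempty (Fin d) := Fin.pos_iff_nonempty.1 hd
  abs_prod_lt_one fun i => abs_gfun_lt_one P hpos (r i)

noncomputable def checkWeight {d : ℕ} (r : Fin d → R) : ℝ :=
  (1 / 2 : ℝ) ^ (d - 1) * ∏ i, (P (r i) 0 + P (r i) 1)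

lemma checkWeight_pos (hpos : ∀ r x, 0 < P r x) {d : ℕ} (r : Fin d → R) :
    0 < checkWeight P r :=
  mul_pos (by positivity) (prod_pos fun i _ => add_pos (hpos (r i) 0) (hpos (r i) 1))

theorem checkPmf_eq [Fintype R] (hpos : ∀ r x, 0 < P r x) {d : ℕ} (r : Fin d → R)
    (x : ZMod 2) :
    checkPmf P d r x = checkWeight P r * (1 + bitSign x * gProd P r) / 2 := by
  have hdiff : ∏ i, (P (r i) 0 - P (r i) 1) = (∏ i, (P (r i) 0 + P (r i) 1)) * gProd P r := by
    rw [gProd, ← prod_mul_distrib]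
    refine prod_congr rfl fun i _ => ?_
    rw [gfun, mul_div_cancel₀ _ (add_pos (hpos (r i) 0) (hpos (r i) 1)).ne']
  rw [checkPmf, sum_filter_sum_eq_prod (fun i => P (r i)), hdiff, checkWeight]
  ring

lemma checkPmf_pos [Fintype R] (hpos : ∀ r x, 0 < P r x) {d : ℕ} (hd : 0 < d) (r : Fin d → R)
    (x : ZMod 2) : 0 < checkPmf P d r x := by
  have hg := abs_lt.1 (abs_gProd_lt_one P hpos hd r)
  have hfactor : 0 < 1 + bitSign x * gProd P r := by
    rcases x.two_eq_zero_or_one with rfl | rfl <;> simp only [bitSign_zero, bitSign_one] <;>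
      linarith
  rw [checkPmf_eq P hpos]
  exact div_pos (mul_pos (checkWeight_pos P hpos r) hfactor) two_pos

lemma card_filter_sum_eq {d : ℕ} (hd : 0 < d) (x : ZMod 2) :
    (#(univ.filter fun b : Fin d → ZMod 2 => ∑ i, b i = x) : ℝ) = 2 ^ (d - 1) := by
  obtain ⟨k, rfl⟩ := Nat.exists_eq_succ_of_ne_zero hd.ne'
  have h := sum_filter_sum_eq_prod (fun (_ : Fin (k + 1)) (_ : ZMod 2) => (1 : ℝ)) x
  simp only [prod_const_one, sum_const, nsmul_one] at h
  rw [h]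
  norm_num [pow_succ]

theorem checkPmf_sum_one [Fintype R] (hsum : ∀ x, ∑ r : R, P r x = 1) {d : ℕ} (hd : 0 < d)
    (x : ZMod 2) : ∑ r : Fin d → R, checkPmf P d r x = 1 := by
  have hinner (b : Fin d → ZMod 2) : ∑ r : Fin d → R, ∏ i, P (r i) (b i) = 1 := by
    rw [← Fintype.prod_sum fun i ρ => P ρ (b i)]
    simp [hsum]
  simp only [checkPmf, ← mul_sum]
  rw [sum_comm, sum_congr rfl fun b _ => hinner b, sum_const, nsmul_one, card_filter_sum_eq hd,
    ← mul_pow]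
  norm_num

theorem checkPmf_cross_sub [Fintype R] (hpos : ∀ r x, 0 < P r x) {d : ℕ} (r r' : Fin d → R) :
    checkPmf P d r 0 * checkPmf P d r' 1 - checkPmf P d r' 0 * checkPmf P d r 1
      = checkWeight P r * checkWeight P r' / 2 * (gProd P r - gProd P r') := by
  simp only [checkPmf_eq P hpos, bitSign_zero, bitSign_one]
  ring

theorem checkPmf_cross_le_iff [Fintype R] (hpos : ∀ r x, 0 < P r x) {d : ℕ}
    (r r' : Fin d → R) :
    checkPmf P d r' 0 * checkPmf P d r 1 ≤ checkPmf P d r 0 * checkPmf P d r' 1 ↔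
      gProd P r' ≤ gProd P r := by
  have := checkWeight_pos P hpos r
  have := checkWeight_pos P hpos r'
  rw [← sub_nonneg, checkPmf_cross_sub P hpos, mul_nonneg_iff_of_pos_left (by positivity),
    sub_nonneg]

end CheckChannel

section NegSignLog

open Real

noncomputable def negSignLog (t : ℝ) : ℝ := -Real.sign t * log |t|

@[simp] lemma negSignLog_zero : negSignLog 0 = 0 := by simp [negSignLog]

lemma negSignLog_of_pos {t : ℝ} (ht : 0 < t) : negSignLog t = -log t := by
  simp [negSignLog, Real.sign_of_pos ht, abs_of_pos ht]

lemma negSignLog_of_neg {t : ℝ} (ht : t < 0) : negSignLog t = log (-t) := by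
  simp [negSignLog, Real.sign_of_neg ht, abs_of_neg ht]

lemma sign_negSignLog {t : ℝ} (ht : |t| < 1) : Real.sign (negSignLog t) = Real.sign t := by
  obtain ⟨h₁, h₂⟩ := abs_lt.1 ht
  rcases lt_trichotomy t 0 with h | rfl | h
  · rw [negSignLog_of_neg h, Real.sign_of_neg h,
      Real.sign_of_neg (log_neg (by linarith) (by linarith))]
  · simp
  · rw [negSignLog_of_pos h, Real.sign_of_pos h, Real.sign_of_pos (neg_pos.2 (log_neg h h₂))]

lemma abs_negSignLog {t : ℝ} (ht : |t| ≤ 1) : |negSignLog t| = -log |t| := by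
  rcases eq_or_ne t 0 with rfl | h
  · simp
  · rw [negSignLog, abs_mul, abs_neg, abs_of_nonpos (log_nonpos (abs_nonneg t) ht)]
    rcases Real.sign_apply_eq_of_ne_zero t h with hs | hs <;> simp [hs]

lemma rsucc_irrefl (a : ℝ) : ¬ rsucc a a := by
  rintro (h | ⟨-, h⟩) <;> exact lt_irrefl _ h

lemma rsucc_asymm {a b : ℝ} (h : rsucc a b) : ¬ rsucc b a := by
  rcases h with h | ⟨h₁, h₂⟩ <;> rintro (h' | ⟨h₁', h₂'⟩) <;> linarith

theorem rsucc_negSignLog_of_lt {s t : ℝ} (hs : |s| < 1) (ht : |t| < 1) (h : t < s) :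
    rsucc (negSignLog s) (negSignLog t) := by
  obtain ⟨hs₁, hs₂⟩ := abs_lt.1 hs
  obtain ⟨ht₁, ht₂⟩ := abs_lt.1 ht
  unfold rsucc
  rw [sign_negSignLog hs, sign_negSignLog ht]
  rcases lt_trichotomy t 0 with ht0 | rfl | ht0 <;> rcases lt_trichotomy s 0 with hs0 | rfl | hs0
  · right
    rw [Real.sign_of_neg hs0, Real.sign_of_neg ht0, negSignLog_of_neg hs0, negSignLog_of_neg ht0]
    exact ⟨rfl, log_lt_log (by linarith) (by linarith)⟩
  · left; simp [Real.sign_of_neg ht0]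
  · left; rw [Real.sign_of_neg ht0, Real.sign_of_pos hs0]; norm_num
  · linarith
  · linarith
  · left; simp [Real.sign_of_pos hs0]
  · linarith
  · linarith
  · right
    rw [Real.sign_of_pos hs0, Real.sign_of_pos ht0, negSignLog_of_pos hs0, negSignLog_of_pos ht0]
    exact ⟨rfl, neg_lt_neg (log_lt_log ht0 h)⟩

theorem lt_of_rsucc_negSignLog {s t : ℝ} (hs : |s| < 1) (ht : |t| < 1)
    (h : rsucc (negSignLog s) (negSignLog t)) : t < s := by
  rcases lt_trichotomy t s with h' | rfl | h'
  · exact h'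
  · exact absurd h (rsucc_irrefl _)
  · exact absurd (rsucc_negSignLog_of_lt ht hs h') (rsucc_asymm h)

theorem negSignLog_injOn : Set.InjOn negSignLog {t | |t| < 1} := by
  intro s hs t ht h
  by_contra hne
  rcases lt_or_gt_of_ne hne with h' | h'
  · exact rsucc_irrefl _ (h ▸ rsucc_negSignLog_of_lt ht hs h')
  · exact rsucc_irrefl _ (h ▸ rsucc_negSignLog_of_lt hs ht h')

theorem PhiC_comp_negSignLog {R : Type*} {g : R → ℝ} (hg : ∀ r, |g r| < 1) {d : ℕ}
    (r : Fin d → R) : PhiC (negSignLog ∘ g) r = negSignLog (∏ i, g (r i)) := by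
  simp only [PhiC, Function.comp_apply]
  by_cases hz : ∃ i, g (r i) = 0
  · obtain ⟨i, hi⟩ := hz
    rw [prod_eq_zero (mem_univ i) (by simp [hi]), prod_eq_zero (mem_univ i) hi]
    simp
  · push Not at hz
    simp only [sign_negSignLog (hg _), abs_negSignLog (hg _).le]
    rw [negSignLog, Real.sign_prod, sum_neg_distrib, abs_prod,
      ← log_prod fun i _ => abs_ne_zero.2 (hz i)]
    ring

end NegSignLog

lemma phiStar_eq_negSignLog_comp_gfun {R : Type*} (P : R → ZMod 2 → ℝ)
    (hpos : ∀ r x, 0 < P r x) (ε : ℝ) : phiStar P ε = negSignLog ∘ gfun P := by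
  ext r
  have h := abs_gfun_lt_one P hpos r
  rw [phiStar, if_neg h.ne, Function.comp_apply]
  split_ifs with h0
  · rw [h0, negSignLog_zero]
  · rfl

theorem PhiC_phiStar_s6 {R : Type*} (P : R → ZMod 2 → ℝ) (hpos : ∀ r x, 0 < P r x) (ε : ℝ)
    {d : ℕ} (r : Fin d → R) : PhiC (phiStar P ε) r = negSignLog (gProd P r) := by
  rw [phiStar_eq_negSignLog_comp_gfun P hpos, PhiC_comp_negSignLog (abs_gfun_lt_one P hpos)]
  rfl

section SequentialQuantization

def SequentialQuantizersOptimal (M : ℕ) : Prop :=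
  ∀ (N : ℕ) (W : Fin N → ZMod 2 → ℝ),
    (∀ y x, 0 ≤ W y x) → (∀ x, ∑ y : Fin N, W y x = 1) →
    (∀ (i : ℕ) (h : i + 1 < N),
      W ⟨i, Nat.lt_of_succ_lt h⟩ 0 * W ⟨i + 1, h⟩ 1 ≥
        W ⟨i + 1, h⟩ 0 * W ⟨i, Nat.lt_of_succ_lt h⟩ 1) →
    (∀ i j k : Fin N, i ≤ j → j ≤ k →
      W i 0 * W k 1 = W k 0 * W i 1 → W i 0 * W j 1 = W j 0 * W i 1) →
    ∃ Q : Fin N → Fin M, Monotone Q ∧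
      (∀ i j : Fin N, W i 0 * W j 1 = W j 0 * W i 1 → Q i = Q j) ∧
      ∀ f : Fin N → Fin M, mutualInfo W f ≤ mutualInfo W Q

lemma exists_equiv_fin_antitone {α β : Type*} [Fintype α] [LinearOrder β] (f : α → β) :
    ∃ e : Fin (Fintype.card α) ≃ α, Antitone (f ∘ e) := by
  let e₀ := (Fintype.equivFin α).symm
  exact ⟨(Tuple.sort fun i => OrderDual.toDual (f (e₀ i))).trans e₀,
    Tuple.monotone_sort fun i => OrderDual.toDual (f (e₀ i))⟩

variable {Y Y' Z : Type*} [Fintype Y] [Fintype Y']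

lemma jointPmf_comp_equiv (e : Y' ≃ Y) (W : Y → ZMod 2 → ℝ) (f : Y → Z) (x : ZMod 2)
    (z : Z) : jointPmf (W ∘ e) (f ∘ e) x z = jointPmf W f x z := by
  unfold jointPmf
  congr 1
  exact sum_equiv e (by simp) (by simp)

lemma mutualInfo_comp_equiv [Fintype Z] (e : Y' ≃ Y) (W : Y → ZMod 2 → ℝ) (f : Y → Z) :
    mutualInfo (W ∘ e) (f ∘ e) = mutualInfo W f := by
  simp only [mutualInfo, jointPmf_comp_equiv]

theorem exists_optimal_quantizer_of_cross_le_iff {M : ℕ} (hfact : SequentialQuantizersOptimal M)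
    (W : Y → ZMod 2 → ℝ) (hW₀ : ∀ y x, 0 ≤ W y x) (hW₁ : ∀ x, ∑ y, W y x = 1)
    (s : Y → ℝ) (hs : ∀ y y', W y' 0 * W y 1 ≤ W y 0 * W y' 1 ↔ s y' ≤ s y) :
    ∃ Q : Y → Fin M, (∀ y y', s y' < s y → Q y ≤ Q y') ∧
      (∀ y y', s y = s y' → Q y = Q y') ∧
      ∀ f : Y → Fin M, mutualInfo W f ≤ mutualInfo W Q := by
  have hs_eq (y y' : Y) : W y 0 * W y' 1 = W y' 0 * W y 1 ↔ s y = s y' := by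
    rw [le_antisymm_iff, hs y' y, hs y y', ← le_antisymm_iff]
  obtain ⟨e, he⟩ := exists_equiv_fin_antitone s
  obtain ⟨Q, hQmono, hQconst, hQopt⟩ := hfact _ (W ∘ e) (fun i => hW₀ (e i))
    (fun x => by rw [← hW₁ x]; exact e.sum_comp (W · x))
    (fun i _ => (hs _ _).2 (he (Fin.mk_le_mk.2 (Nat.le_succ i))))
    (fun i j k hij hjk hik =>
      (hs_eq _ _).2 (le_antisymm (((hs_eq _ _).1 hik).trans_le (he hjk)) (he hij)))
  refine ⟨Q ∘ e.symm, fun y y' h => hQmono ?_,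
    fun y y' h => hQconst _ _ ((hs_eq _ _).2 (by simpa using h)), fun f => ?_⟩
  · by_contra! hlt
    have := he hlt.le
    simp only [Function.comp_apply, Equiv.apply_symm_apply] at this
    linarith
  · calc mutualInfo W f = mutualInfo (W ∘ e) (f ∘ e) := (mutualInfo_comp_equiv e W f).symm
      _ ≤ mutualInfo (W ∘ e) Q := hQopt _
      _ = mutualInfo W (Q ∘ e.symm) := by
        rw [← mutualInfo_comp_equiv e W (Q ∘ e.symm)]
        simp [Function.comp_def]

end SequentialQuantization

theorem stmt_6_general {R : Type*} [Fintype R] (P : R → ZMod 2 → ℝ)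
    (hpos : ∀ r x, 0 < P r x) (hsum : ∀ x, ∑ r : R, P r x = 1)
    (dc : ℕ) (hdc : 2 ≤ dc) (ε : ℝ)
    (M : ℕ) (hM : 1 ≤ M)
    (hfact : ∀ (N : ℕ) (W : Fin N → ZMod 2 → ℝ),
      (∀ y x, 0 ≤ W y x) → (∀ x, ∑ y : Fin N, W y x = 1) →
      -- the enumeration is sorted by decreasing likelihood ratio
      (∀ (i : ℕ) (h : i + 1 < N),
        W ⟨i, Nat.lt_of_succ_lt h⟩ 0 * W ⟨i + 1, h⟩ 1 ≥
          W ⟨i + 1, h⟩ 0 * W ⟨i, Nat.lt_of_succ_lt h⟩ 1) →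
      -- elements with equal likelihood ratio are consecutive
      (∀ i j k : Fin N, i ≤ j → j ≤ k →
        W i 0 * W k 1 = W k 0 * W i 1 → W i 0 * W j 1 = W j 0 * W i 1) →
      ∃ Q : Fin N → Fin M, Monotone Q ∧
        (∀ i j : Fin N, W i 0 * W j 1 = W j 0 * W i 1 → Q i = Q j) ∧
        ∀ f : Fin N → Fin M, mutualInfo W f ≤ mutualInfo W Q) :
    ∃ Λ : ℝ → Fin M,
      -- `Λ` is sequential w.r.t. the labelling `a_1 ≻ a_2 ≻ ⋯ ≻ a_{|A|}` of the
      -- distinct values of `Φ` on `R^{d_c−1}`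
      (∀ a b : ℝ, (∃ r : Fin (dc - 1) → R, PhiC (phiStar P ε) r = a) →
        (∃ r : Fin (dc - 1) → R, PhiC (phiStar P ε) r = b) →
        rsucc a b → Λ a ≤ Λ b) ∧
      -- and `Λ ∘ Φ` attains the maximal mutual information
      ∀ f : (Fin (dc - 1) → R) → Fin M,
        mutualInfo (checkPmf P (dc - 1)) f ≤
          mutualInfo (checkPmf P (dc - 1))
            (fun r => Λ (PhiC (phiStar P ε) r)) := by
  set d := dc - 1
  have hd : 0 < d := by omega
  obtain ⟨Q, hQmono, hQconst, hQopt⟩ := exists_optimal_quantizer_of_cross_le_iff hfact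
    (checkPmf P d) (fun r x => (checkPmf_pos P hpos hd r x).le) (checkPmf_sum_one P hsum hd)
    (gProd P) (checkPmf_cross_le_iff P hpos)
  have hΦ := PhiC_phiStar_s6 P hpos ε (d := d)
  have hg := abs_gProd_lt_one P hpos hd
  have hfactors : Q.FactorsThrough (PhiC (phiStar P ε)) := fun r r' h =>
    hQconst r r' (negSignLog_injOn (hg r) (hg r') (by rwa [← hΦ, ← hΦ]))
  refine ⟨Function.extend (PhiC (phiStar P ε)) Q fun _ => ⟨0, hM⟩, ?_, fun f => ?_⟩
  · rintro _ _ ⟨r, rfl⟩ ⟨r', rfl⟩ h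
    rw [hfactors.extend_apply, hfactors.extend_apply]
    rw [hΦ, hΦ] at h
    exact hQmono r r' (lt_of_rsucc_negSignLog (hg r) (hg r') h)
  · simpa only [hfactors.extend_apply] using hQopt f

/-- Theorem 1: with `φ = φ_c*` and an admissible `ε`, the maximum of
`I(X; f(R_1,…,R_{d_c−1}))` over all `f : R^{d_c−1} → S` (with
`S = {0,…,M−1}`) is attained by a function of the form `Λ ∘ Φ` where `Λ` is a
sequential (threshold) quantizer with respect to the `≻`-ordering of the
values of `Φ`. The hypothesis `hfact` is the assumed fact about optimal
sequential quantization of finite binary-input channels whose outputs are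
enumerated in decreasing likelihood-ratio order with equal-ratio elements
consecutive. -/
theorem stmt_6 {R : Type*} [Fintype R] [Nonempty R] (P : R → ZMod 2 → ℝ)
    (hpos : ∀ r x, 0 < P r x) (hsum : ∀ x, ∑ r : R, P r x = 1)
    (dc : ℕ) (hdc : 2 ≤ dc) (ε : ℝ) (hε : admissible P dc ε)
    (M : ℕ) (hM : 1 ≤ M)
    (hfact : ∀ (N : ℕ) (W : Fin N → ZMod 2 → ℝ),
      (∀ y x, 0 ≤ W y x) → (∀ x, ∑ y : Fin N, W y x = 1) →
      -- the enumeration is sorted by decreasing likelihood ratio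
      (∀ (i : ℕ) (h : i + 1 < N),
        W ⟨i, Nat.lt_of_succ_lt h⟩ 0 * W ⟨i + 1, h⟩ 1 ≥
          W ⟨i + 1, h⟩ 0 * W ⟨i, Nat.lt_of_succ_lt h⟩ 1) →
      -- elements with equal likelihood ratio are consecutive
      (∀ i j k : Fin N, i ≤ j → j ≤ k →
        W i 0 * W k 1 = W k 0 * W i 1 → W i 0 * W j 1 = W j 0 * W i 1) →
      ∃ Q : Fin N → Fin M, Monotone Q ∧
        (∀ i j : Fin N, W i 0 * W j 1 = W j 0 * W i 1 → Q i = Q j) ∧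
        ∀ f : Fin N → Fin M, mutualInfo W f ≤ mutualInfo W Q) :
    ∃ Λ : ℝ → Fin M,
      -- `Λ` is sequential w.r.t. the labelling `a_1 ≻ a_2 ≻ ⋯ ≻ a_{|A|}` of the
      -- distinct values of `Φ` on `R^{d_c−1}`
      (∀ a b : ℝ, (∃ r : Fin (dc - 1) → R, PhiC (phiStar P ε) r = a) →
        (∃ r : Fin (dc - 1) → R, PhiC (phiStar P ε) r = b) →
        rsucc a b → Λ a ≤ Λ b) ∧
      -- and `Λ ∘ Φ` attains the maximal mutual information
      ∀ f : (Fin (dc - 1) → R) → Fin M,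
        mutualInfo (checkPmf P (dc - 1)) f ≤
          mutualInfo (checkPmf P (dc - 1))
            (fun r => Λ (PhiC (phiStar P ε) r)) :=
  stmt_6_general P hpos hsum dc hdc ε M hM hfact
end
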